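/- For β ∈ (0,1) define f(ζ;β) := ζ + (8/π)·tan²(πβ/2)·sinh(πζ/2)/( cos(πβ/2) + cosh(πζ/2) ), γ(β) := −8·sin(πβ/2)·sec³(πβ/2), and W_ζ(ζ) := 1 + (γ(β)/(4i))·[coth(π(ζ−iβ)/2) − coth(π(ζ+iβ)/2)]. Then for every ξ ∈ ℝ, ∂_ζ f(ξ + i; β) ≠ 0 and |W_ζ(ξ + i)| = |∂_ζ f(ξ + i; β)|. -/

import Mathlib

open Set

/-- Complex hyperbolic cotangent. -/
noncomputable def cCoth (z : ℂ) : ℂ := Complex.cosh z / Complex.sinh z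

/-- The derivative `W_ζ` of the complex relative velocity potential for a point vortex of
strength `γ` at `iβ` and a mirror vortex of strength `-γ` at `-iβ` in the strip. -/
noncomputable def Wzeta (γ β : ℝ) (z : ℂ) : ℂ :=
  1 + (γ : ℂ) / (4 * Complex.I) *
    (cCoth ((Real.pi : ℂ) / 2 * (z - Complex.I * β)) -
      cCoth ((Real.pi : ℂ) / 2 * (z + Complex.I * β)))

/-- The conformal map of the explicit zero-gravity solitary wave of
Crowdy–Nelson–Krishnamurthy. -/
noncomputable def fCNK (β : ℝ) (z : ℂ) : ℂ :=
  z + ((8 / Real.pi * Real.tan (Real.pi * β / 2) ^ 2 : ℝ) : ℂ) *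
    Complex.sinh ((Real.pi : ℂ) * z / 2) /
      (((Real.cos (Real.pi * β / 2) : ℝ) : ℂ) + Complex.cosh ((Real.pi : ℂ) * z / 2))

/-- The circulation of the explicit zero-gravity solitary wave. -/
noncomputable def gammaCNK (β : ℝ) : ℝ :=
  -8 * Real.sin (Real.pi * β / 2) / Real.cos (Real.pi * β / 2) ^ 3

/-!
On the free surface `ζ = ξ + i` one has `cosh (πζ/2) = i sinh (πξ/2)`, and both sides reduce to the
real number `1 + 4 tan² (πβ/2) / (sinh² (πξ/2) + cos² (πβ/2))`, which is at least `1` (so `f_ζ ≠ 0`).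

For `W_ζ`, the two `coth` terms combine into `sinh (iπβ) / (sinh u sinh v)`, and on the surface
`sinh v = -conj (sinh u)`, so `sinh u sinh v = -(sinh² (πξ/2) + cos² (πβ/2))`: `W_ζ` is real there.

For `f`, `f_ζ = 1 + 4 tan² (πβ/2) (1 + cos (πβ/2) cosh w) / (cos (πβ/2) + cosh w)²` with `w = πζ/2`;
on the surface, thanks to `cos² (1 + tan²) = 1`, this is the perfect square
`((cos (1 + 2 tan²) + i s) / (cos + i s))²` with `s = sinh (πξ/2)`, whose modulus is explicit.
-/

open Complex
open scoped Real

lemma Complex.sinh_add_pi_div_two_mul_I (z : ℂ) : sinh (z + π / 2 * I) = cosh z * I := by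
  rw [sinh_add, sinh_mul_I, cosh_mul_I, cos_pi_div_two, sin_pi_div_two]; ring

lemma Complex.cosh_add_pi_div_two_mul_I (z : ℂ) : cosh (z + π / 2 * I) = sinh z * I := by
  rw [cosh_add, sinh_mul_I, cosh_mul_I, cos_pi_div_two, sin_pi_div_two]; ring

lemma Complex.cosh_sub_mul_I_mul_cosh_add_mul_I (z w : ℂ) :
    cosh (z - w * I) * cosh (z + w * I) = sinh z ^ 2 + cos w ^ 2 := by
  rw [cosh_sub, cosh_add, cosh_mul_I, sinh_mul_I]
  linear_combination cos w ^ 2 * cosh_sq z + sinh z ^ 2 * sin_sq_add_cos_sq w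
    - (sinh z * sin w) ^ 2 * I_sq

lemma cCoth_sub_cCoth {u v : ℂ} (hu : sinh u ≠ 0) (hv : sinh v ≠ 0) :
    cCoth u - cCoth v = sinh (v - u) / (sinh u * sinh v) := by
  rw [cCoth, cCoth, div_sub_div _ _ hu hv, sinh_sub]; ring_nf

lemma Wzeta_surface (γ β ξ : ℝ) (hcb : Real.cos (π * β / 2) ≠ 0) :
    Wzeta γ β (ξ + I) =
      ((1 - γ * Real.sin (π * β / 2) * Real.cos (π * β / 2) /
        (2 * (Real.sinh (π * ξ / 2) ^ 2 + Real.cos (π * β / 2) ^ 2)) : ℝ) : ℂ) := by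
  have hu : π / 2 * ((ξ : ℂ) + I - I * β) = (π * ξ / 2 - π * β / 2 * I) + π / 2 * I := by ring
  have hv : π / 2 * ((ξ : ℂ) + I + I * β) = (π * ξ / 2 + π * β / 2 * I) + π / 2 * I := by ring
  have hvu : π / 2 * ((ξ : ℂ) + I + I * β) - π / 2 * ((ξ : ℂ) + I - I * β) =
      (2 * (π * β / 2)) * I := by
    ring
  have hD : sinh (π * ξ / 2) ^ 2 + cos (π * β / 2) ^ 2 ≠ 0 := by
    have : (0 : ℝ) < Real.sinh (π * ξ / 2) ^ 2 + Real.cos (π * β / 2) ^ 2 := by positivity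
    exact_mod_cast this.ne'
  have hprod : sinh (π / 2 * ((ξ : ℂ) + I - I * β)) * sinh (π / 2 * ((ξ : ℂ) + I + I * β)) =
      -(sinh (π * ξ / 2) ^ 2 + cos (π * β / 2) ^ 2) := by
    rw [hu, hv, sinh_add_pi_div_two_mul_I, sinh_add_pi_div_two_mul_I,
      ← cosh_sub_mul_I_mul_cosh_add_mul_I]
    linear_combination (cosh (π * ξ / 2 - π * β / 2 * I) * cosh (π * ξ / 2 + π * β / 2 * I)) * I_sq
  obtain ⟨hu0, hv0⟩ := mul_ne_zero_iff.mp (hprod ▸ neg_ne_zero.mpr hD)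
  rw [Wzeta, cCoth_sub_cCoth hu0 hv0, hvu, sinh_mul_I, sin_two_mul, hprod]
  push_cast
  field_simp
  ring

lemma Wzeta_gammaCNK_surface (β ξ : ℝ) (hcb : Real.cos (π * β / 2) ≠ 0) :
    Wzeta (gammaCNK β) β (ξ + I) =
      ((1 + 4 * Real.tan (π * β / 2) ^ 2 /
        (Real.sinh (π * ξ / 2) ^ 2 + Real.cos (π * β / 2) ^ 2) : ℝ) : ℂ) := by
  rw [Wzeta_surface _ _ _ hcb, gammaCNK, Real.tan_eq_sin_div_cos]
  congr 1
  field_simp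
  ring

lemma hasDerivAt_fCNK (β : ℝ) {ζ : ℂ}
    (h : (Real.cos (π * β / 2) : ℂ) + cosh (π * ζ / 2) ≠ 0) :
    HasDerivAt (fCNK β)
      (1 + 4 * Real.tan (π * β / 2) ^ 2 * (1 + Real.cos (π * β / 2) * cosh (π * ζ / 2)) /
        (Real.cos (π * β / 2) + cosh (π * ζ / 2)) ^ 2) ζ := by
  have hlin : HasDerivAt (fun z : ℂ => π * z / 2) (π / 2) ζ := by
    simpa using ((hasDerivAt_id ζ).const_mul (π : ℂ)).div_const 2
  have hsinh := (hasDerivAt_sinh _).comp ζ hlin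
  have hcosh := (hasDerivAt_cosh _).comp ζ hlin
  refine ((hasDerivAt_id ζ).add
    ((hsinh.const_mul ((8 / π * Real.tan (π * β / 2) ^ 2 : ℝ) : ℂ)).div
      (hcosh.const_add ((Real.cos (π * β / 2) : ℝ) : ℂ)) h)).congr_deriv ?_
  have hC : ((8 / π * Real.tan (π * β / 2) ^ 2 : ℝ) : ℂ) =
      8 / π * (Real.tan (π * β / 2) : ℂ) ^ 2 := by
    norm_cast
  simp only [Function.comp_apply, hC]
  generalize (Real.tan (π * β / 2) : ℂ) = t
  generalize (Real.cos (π * β / 2) : ℂ) = c at h ⊢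
  field_simp
  linear_combination (8 * t ^ 2) * cosh_sq (π * ζ / 2)

lemma deriv_fCNK_surface (β ξ : ℝ) (hcb : Real.cos (π * β / 2) ≠ 0) :
    deriv (fCNK β) (ξ + I) =
      ((((Real.cos (π * β / 2) * (1 + 2 * Real.tan (π * β / 2) ^ 2) : ℝ) : ℂ) +
          Real.sinh (π * ξ / 2) * I) /
        ((Real.cos (π * β / 2) : ℂ) + Real.sinh (π * ξ / 2) * I)) ^ 2 := by
  have hcosh : cosh (π * (ξ + I) / 2) = (Real.sinh (π * ξ / 2) : ℂ) * I := by
    rw [show (π : ℂ) * (ξ + I) / 2 = ((π * ξ / 2 : ℝ) : ℂ) + π / 2 * I by push_cast; ring,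
      cosh_add_pi_div_two_mul_I, ofReal_sinh]
  have hden : (Real.cos (π * β / 2) : ℂ) + Real.sinh (π * ξ / 2) * I ≠ 0 := by
    intro h
    apply hcb
    simpa [-ofReal_cos, -ofReal_sinh] using congrArg re h
  have hsec : (1 + (Real.tan (π * β / 2) : ℂ) ^ 2) * (Real.cos (π * β / 2) : ℂ) ^ 2 = 1 := by
    exact_mod_cast Real.one_add_tan_sq_mul_cos_sq_eq_one hcb
  rw [(hasDerivAt_fCNK β (hcosh ▸ hden)).deriv, hcosh]
  simp only [ofReal_mul, ofReal_add, ofReal_pow, ofReal_one, ofReal_ofNat]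
  generalize (Real.tan (π * β / 2) : ℂ) = t at hsec ⊢
  generalize (Real.cos (π * β / 2) : ℂ) = c at hsec hden ⊢
  field_simp
  linear_combination (-4 * t ^ 2) * hsec

lemma Complex.norm_div_add_mul_I_sq (p q s : ℝ) :
    ‖((p + s * I) / (q + s * I)) ^ 2‖ = (p ^ 2 + s ^ 2) / (q ^ 2 + s ^ 2) := by
  rw [norm_pow, norm_div, norm_add_mul_I, norm_add_mul_I, div_pow,
    Real.sq_sqrt (by positivity), Real.sq_sqrt (by positivity)]

lemma norm_deriv_fCNK_surface (β ξ : ℝ) (hcb : Real.cos (π * β / 2) ≠ 0) :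
    ‖deriv (fCNK β) (ξ + I)‖ =
      1 + 4 * Real.tan (π * β / 2) ^ 2 /
        (Real.sinh (π * ξ / 2) ^ 2 + Real.cos (π * β / 2) ^ 2) := by
  rw [deriv_fCNK_surface β ξ hcb, norm_div_add_mul_I_sq]
  have hsec := Real.one_add_tan_sq_mul_cos_sq_eq_one hcb
  field_simp
  linear_combination (4 * Real.tan (π * β / 2) ^ 2 *
    (Real.sinh (π * ξ / 2) ^ 2 + Real.cos (π * β / 2) ^ 2)) * hsec

theorem statement15 (β : ℝ) (hβ : β ∈ Ioo (0 : ℝ) 1) :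
    ∀ ξ : ℝ, deriv (fCNK β) ((ξ : ℂ) + Complex.I) ≠ 0 ∧
      ‖Wzeta (gammaCNK β) β ((ξ : ℂ) + Complex.I)‖ =
        ‖deriv (fCNK β) ((ξ : ℂ) + Complex.I)‖ := by
  intro ξ
  have hcb : Real.cos (π * β / 2) ≠ 0 := by
    refine (Real.cos_pos_of_mem_Ioo ⟨?_, ?_⟩).ne' <;> nlinarith [Real.pi_pos, hβ.1, hβ.2]
  have hnorm : ‖deriv (fCNK β) (ξ + I)‖ =
      1 + 4 * Real.tan (π * β / 2) ^ 2 /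
        (Real.sinh (π * ξ / 2) ^ 2 + Real.cos (π * β / 2) ^ 2) :=
    norm_deriv_fCNK_surface β ξ hcb
  have hone_le : 1 ≤ 1 + 4 * Real.tan (π * β / 2) ^ 2 /
      (Real.sinh (π * ξ / 2) ^ 2 + Real.cos (π * β / 2) ^ 2) :=
    le_add_of_nonneg_right (by positivity)
  refine ⟨fun h => ?_, ?_⟩
  · rw [h, norm_zero] at hnorm
    linarith
  · rw [Wzeta_gammaCNK_surface β ξ hcb, norm_real, Real.norm_of_nonneg (by linarith), hnorm]
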